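/- Let G be a bipartite graph with parts V₁ ∪ {s₁} and V₂ ∪ {s₂}, where s₂ is adjacent to every vertex of V₁ and to s₁, s₁ is adjacent to every vertex of V₂ and to s₂, and the adjacencies between V₁ and V₂ are given by an arbitrary edge set E ⊆ V₁ × V₂. Fix any vertex k₀ ∈ V₁. Then applying the Pauli-X measurement pattern at s₂ with special neighbor k₀ (i.e., the graph operation G ↦ τ_{k₀}( τ_{s₂}( τ_{k₀}(G) ) − s₂ )), followed by the Pauli-X measurement pattern at s₁ with the same special neighbor k₀, yields the bipartite complement graph: the graph on vertex set V₁ ∪ V₂ in which vᵢ ∈ V₁ and vⱼ ∈ V₂ are adjacent iff (vᵢ, vⱼ) ∉ E, and no two vertices within the same part are adjacent. -/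

import Mathlib

/-- Local complementation of `G` at vertex `v`: adjacency between distinct
vertices `x, y` is toggled iff both are neighbors of `v`. -/
def localComp {V : Type*} (G : SimpleGraph V) (v : V) : SimpleGraph V where
  Adj x y := x ≠ y ∧ ¬(G.Adj x y ↔ (G.Adj v x ∧ G.Adj v y))
  symm := by
    constructor
    intro x y ⟨hxy, h⟩
    refine ⟨hxy.symm, ?_⟩
    rwa [G.adj_comm y x, and_comm]
  loopless := by
    constructor
    intro x ⟨h, _⟩
    exact h rfl

/-- Deletion of vertex `w`: remove all edges incident to `w`. -/
def deleteVert {V : Type*} (G : SimpleGraph V) (w : V) : SimpleGraph V where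
  Adj x y := G.Adj x y ∧ x ≠ w ∧ y ≠ w
  symm := ⟨fun x y ⟨h, hx, hy⟩ => ⟨h.symm, hy, hx⟩⟩
  loopless := ⟨fun x ⟨h, _, _⟩ => G.loopless.irrefl x h⟩

/-- Graph operation of Pauli-X measurement at `a` with special neighbor `k0`:
`τ_{k0}( τ_a( τ_{k0}(G) ) − a )`. -/
def xMeas {V : Type*} (G : SimpleGraph V) (a k0 : V) : SimpleGraph V :=
  localComp (deleteVert (localComp (localComp G k0) a) a) k0

/-!
Measuring `X` at `a` with special neighbour `b ∼ a` is a pivot on the edge `ab` followed by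
deleting `a`: the vertex `b` inherits the neighbourhood of `a`, and every other pair `x, y` has its
adjacency toggled exactly when `(a ∼ x ∧ b ∼ y) xor (a ∼ y ∧ b ∼ x)`. Composing the measurement at
`s₂` with the one at `s₁` (where `s₁ ∼ s₂` and `s₁ ≁ k₀`), the terms involving `k₀` cancel: a pair
`x, y ∉ {s₁, s₂, k₀}` is toggled iff `(s₁ ∼ x ∧ s₂ ∼ y) xor (s₁ ∼ y ∧ s₂ ∼ x)`, that is, iff `x` and
`y` lie on opposite sides, while `k₀` ends up adjacent to `N(s₁) Δ N(k₀)`, which is `V₂` minus the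
`E`-neighbours of `k₀`.
-/

section

variable {V : Type*} {G : SimpleGraph V} {a b c v w x y z : V}

theorem localComp_adj_of_ne (hxy : x ≠ y) :
    (localComp G v).Adj x y ↔ Xor (G.Adj x y) (G.Adj v x ∧ G.Adj v y) := by
  simp only [localComp, ne_eq, hxy, not_false_eq_true, true_and, xor_iff_not_iff]

theorem localComp_adj_center : (localComp G v).Adj v x ↔ G.Adj v x := by
  rcases eq_or_ne v x with rfl | hvx
  · simp only [SimpleGraph.irrefl]
  · rw [localComp_adj_of_ne hvx]
    simp only [SimpleGraph.irrefl, false_and, xor_comm _ False, xor_false, id_eq]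

theorem localComp_adj_of_adj (hvw : G.Adj v w) (hwz : w ≠ z) :
    (localComp G v).Adj w z ↔ Xor (G.Adj w z) (G.Adj v z) := by
  rw [localComp_adj_of_ne hwz]
  simp only [hvw, true_and]

theorem not_localComp_adj (hz : ∀ y, ¬G.Adj z y) : ¬(localComp G v).Adj z y :=
  fun h => h.2 ⟨fun h' => (hz y h').elim, fun h' => (hz v h'.1.symm).elim⟩

theorem deleteVert_adj : (deleteVert G v).Adj x y ↔ G.Adj x y ∧ x ≠ v ∧ y ≠ v :=
  Iff.rfl

theorem localComp_localComp_adj_swap (hab : G.Adj a b) (hza : z ≠ a) (hzb : z ≠ b) :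
    (localComp (localComp G b) a).Adj b z ↔ G.Adj a z := by
  rw [localComp_adj_of_adj (localComp_adj_center.2 hab.symm).symm hzb.symm,
    localComp_adj_center, localComp_adj_of_adj hab.symm hza.symm]
  grind

theorem xMeas_not_adj_of_forall_not_adj (hz : ∀ y, ¬G.Adj z y) : ¬(xMeas G a b).Adj z y :=
  not_localComp_adj fun _ h => not_localComp_adj (fun _ => not_localComp_adj hz) h.1

theorem xMeas_not_adj_left : ¬(xMeas G a b).Adj a y :=
  not_localComp_adj fun _ h => h.2.1 rfl

theorem xMeas_adj_center (hab : G.Adj a b) (hya : y ≠ a) (hyb : y ≠ b) :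
    (xMeas G a b).Adj b y ↔ G.Adj a y := by
  rw [xMeas, localComp_adj_center, deleteVert_adj, localComp_localComp_adj_swap hab hya hyb]
  simp only [hab.ne.symm, hya, ne_eq, not_false_eq_true, and_true]

theorem xMeas_adj_of_ne (hab : G.Adj a b) (hxy : x ≠ y) (hxa : x ≠ a) (hya : y ≠ a)
    (hxb : x ≠ b) (hyb : y ≠ b) :
    (xMeas G a b).Adj x y ↔
      Xor (G.Adj x y) (Xor (G.Adj a x ∧ G.Adj b y) (G.Adj a y ∧ G.Adj b x)) := by
  rw [xMeas, localComp_adj_of_ne hxy, deleteVert_adj, deleteVert_adj, deleteVert_adj,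
    localComp_adj_of_ne hxy, localComp_adj_of_ne hxy, localComp_adj_of_adj hab.symm hxa.symm,
    localComp_adj_of_adj hab.symm hya.symm, localComp_localComp_adj_swap hab hxa hxb,
    localComp_localComp_adj_swap hab hya hyb]
  simp only [hxa, hya, hab.ne.symm, ne_eq, not_false_eq_true, and_true]
  grind

theorem xMeas_adj_of_adj_measured (hab : G.Adj a b) (hca : G.Adj c a) (hcb : c ≠ b) :
    (xMeas G a b).Adj c b :=
  ((xMeas_adj_center hab hca.ne hcb).2 hca.symm).symm

theorem xMeas_xMeas_not_adj (h : x = a ∨ x = c ∨ y = a ∨ y = c) :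
    ¬(xMeas (xMeas G a b) c b).Adj x y := by
  have hc : ∀ y, ¬(xMeas (xMeas G a b) c b).Adj c y := fun _ => xMeas_not_adj_left
  have ha : ∀ y, ¬(xMeas (xMeas G a b) c b).Adj a y :=
    fun _ => xMeas_not_adj_of_forall_not_adj fun _ => xMeas_not_adj_left
  rcases h with rfl | rfl | rfl | rfl
  exacts [ha y, hc y, fun h => ha x h.symm, fun h => hc x h.symm]

theorem xMeas_xMeas_adj_center (hab : G.Adj a b) (hca : G.Adj c a) (hncb : ¬G.Adj c b)
    (hcb : c ≠ b) (hya : y ≠ a) (hyb : y ≠ b) (hyc : y ≠ c) :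
    (xMeas (xMeas G a b) c b).Adj b y ↔ Xor (G.Adj c y) (G.Adj b y) := by
  rw [xMeas_adj_center (xMeas_adj_of_adj_measured hab hca hcb) hyc hyb,
    xMeas_adj_of_ne hab hyc.symm hca.ne hya hcb hyb]
  simp only [hca.symm, hncb, G.adj_comm b c, true_and, and_false]
  grind

theorem xMeas_xMeas_adj_of_ne (hab : G.Adj a b) (hca : G.Adj c a) (hncb : ¬G.Adj c b)
    (hcb : c ≠ b) (hxy : x ≠ y) (hxa : x ≠ a) (hya : y ≠ a) (hxb : x ≠ b) (hyb : y ≠ b)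
    (hxc : x ≠ c) (hyc : y ≠ c) :
    (xMeas (xMeas G a b) c b).Adj x y ↔
      Xor (G.Adj x y) (Xor (G.Adj c x ∧ G.Adj a y) (G.Adj c y ∧ G.Adj a x)) := by
  rw [xMeas_adj_of_ne (xMeas_adj_of_adj_measured hab hca hcb) hxy hxc hyc hxb hyb,
    xMeas_adj_of_ne hab hxy hxa hya hxb hyb, xMeas_adj_of_ne hab hxc.symm hca.ne hxa hcb hxb,
    xMeas_adj_of_ne hab hyc.symm hca.ne hya hcb hyb, xMeas_adj_center hab hya hyb,
    xMeas_adj_center hab hxa hxb]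
  simp only [hca.symm, hncb, G.adj_comm b c, true_and, and_false]
  grind

end

theorem xMeas_supernodes_yields_bipartite_complement_general {V : Type*}
    (V1 V2 : Set V) (s1 s2 : V) (E : V → V → Prop) (G : SimpleGraph V)
    (hdisj : Disjoint V1 V2)
    (hs1 : s1 ∉ V1 ∪ V2) (hs2 : s2 ∉ V1 ∪ V2)
    (hG : ∀ x y, G.Adj x y ↔
      (x ∈ V1 ∧ y ∈ V2 ∧ E x y) ∨ (y ∈ V1 ∧ x ∈ V2 ∧ E y x) ∨
      (x = s2 ∧ y ∈ V1) ∨ (y = s2 ∧ x ∈ V1) ∨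
      (x = s1 ∧ y ∈ V2) ∨ (y = s1 ∧ x ∈ V2) ∨
      (x = s1 ∧ y = s2) ∨ (x = s2 ∧ y = s1))
    (k0 : V) (hk0 : k0 ∈ V1) :
    ∀ x y, (xMeas (xMeas G s2 k0) s1 k0).Adj x y ↔
      (x ∈ V1 ∧ y ∈ V2 ∧ ¬ E x y) ∨ (y ∈ V1 ∧ x ∈ V2 ∧ ¬ E y x) := by
  simp only [Set.mem_union, not_or] at hs1 hs2
  have hs2k : G.Adj s2 k0 := (hG _ _).2 (by simp [hk0])
  have hs1s2 : G.Adj s1 s2 := (hG _ _).2 (by simp)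
  have hs12 : s1 ≠ s2 := hs1s2.ne
  have hs1k_not_adj : ¬G.Adj s1 k0 := by rw [hG]; grind
  have hs1k : s1 ≠ k0 := fun h => hs1.1 (h ▸ hk0)
  intro x y
  by_cases hxs : x = s2 ∨ x = s1 ∨ y = s2 ∨ y = s1
  · simp only [xMeas_xMeas_not_adj hxs, false_iff]
    grind
  simp only [not_or] at hxs
  obtain ⟨hxs2, hxs1, hys2, hys1⟩ := hxs
  rcases eq_or_ne x y with rfl | hxy
  · simp only [SimpleGraph.irrefl, false_iff]
    grind
  rcases eq_or_ne x k0 with rfl | hxk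
  · rw [xMeas_xMeas_adj_center hs2k hs1s2 hs1k_not_adj hs1k hys2 hxy.symm hys1, hG, hG]
    grind
  rcases eq_or_ne y k0 with rfl | hyk
  · rw [SimpleGraph.adj_comm, xMeas_xMeas_adj_center hs2k hs1s2 hs1k_not_adj hs1k hxs2 hxy hxs1, hG, hG]
    grind
  rw [xMeas_xMeas_adj_of_ne hs2k hs1s2 hs1k_not_adj hs1k hxy hxs2 hys2 hxk hyk hxs1 hys1, hG, hG, hG]
  grind

/-- Lemma 1 (Case I): in the Inter-QLAN with fully-connected super-nodes
(`s₂` adjacent to all of `V₁` and to `s₁`; `s₁` adjacent to all of `V₂` and to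
`s₂`; client adjacency given by `E ⊆ V₁ × V₂`), applying the X-measurement
pattern at `s₂` and then at `s₁`, both with special neighbor `k₀ ∈ V₁`, yields
the bipartite complement graph on `V₁ ∪ V₂`. -/
theorem xMeas_supernodes_yields_bipartite_complement {V : Type*}
    (V1 V2 : Set V) (s1 s2 : V) (E : V → V → Prop) (G : SimpleGraph V)
    (hdisj : Disjoint V1 V2)
    (hs1 : s1 ∉ V1 ∪ V2) (hs2 : s2 ∉ V1 ∪ V2) (hs12 : s1 ≠ s2)
    (hG : ∀ x y, G.Adj x y ↔
      (x ∈ V1 ∧ y ∈ V2 ∧ E x y) ∨ (y ∈ V1 ∧ x ∈ V2 ∧ E y x) ∨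
      (x = s2 ∧ y ∈ V1) ∨ (y = s2 ∧ x ∈ V1) ∨
      (x = s1 ∧ y ∈ V2) ∨ (y = s1 ∧ x ∈ V2) ∨
      (x = s1 ∧ y = s2) ∨ (x = s2 ∧ y = s1))
    (k0 : V) (hk0 : k0 ∈ V1) :
    ∀ x y, (xMeas (xMeas G s2 k0) s1 k0).Adj x y ↔
      (x ∈ V1 ∧ y ∈ V2 ∧ ¬ E x y) ∨ (y ∈ V1 ∧ x ∈ V2 ∧ ¬ E y x) :=
  xMeas_supernodes_yields_bipartite_complement_general V1 V2 s1 s2 E G hdisj hs1 hs2 hG k0 hk0
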